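/- For vectors ℓ, m ∈ ℝⁿ and a real symmetric 2n×2n matrix S, define φ_{ℓ,m,S} : ℂⁿ → ℂ by φ_{ℓ,m,S}(z) = exp{−i√2(ℓᵀx − mᵀy) − (xᵀ, yᵀ) S (x; y)}, where x = Re z, y = Im z. Let K, C be real 2n×2n matrices with C symmetric, and let R : ℂⁿ → ℝ²ⁿ be Rz = (Re z, Im z)ᵀ. For t ≥ 0 define ℓ_t, m_t ∈ ℝⁿ by (ℓ_t; −m_t) = e^{tKᵀ}(ℓ; −m) and S_t = e^{tKᵀ} S e^{tK} + ½ ∫_0^t e^{sKᵀ} C e^{sK} ds. Then for every z ∈ ℂⁿ and t ≥ 0: φ_{ℓ,m,S}(R⁻¹ e^{tK} R z) · exp{−½ (Rz)ᵀ (∫_0^t e^{sKᵀ} C e^{sK} ds) (Rz)} = φ_{ℓ_t, m_t, S_t}(z). -/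

import Mathlib

open Matrix
open scoped MeasureTheory

/-- The real-linear isomorphism `R : ℂⁿ → ℝ²ⁿ`, `Rz = (Re z, Im z)ᵀ`. -/
noncomputable def Rv {n : ℕ} (z : Fin n → ℂ) : Fin n ⊕ Fin n → ℝ :=
  Sum.elim (fun i => (z i).re) fun i => (z i).im

/-- The inverse `R⁻¹ : ℝ²ⁿ → ℂⁿ`, `(x; y) ↦ x + iy`. -/
noncomputable def Rinv {n : ℕ} (w : Fin n ⊕ Fin n → ℝ) : Fin n → ℂ :=
  fun i => (w (Sum.inl i) : ℂ) + (w (Sum.inr i) : ℂ) * Complex.I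

/-- `B t = ∫_0^t e^{sKᵀ} C e^{sK} ds` (entrywise interval integral). -/
noncomputable def Bmat {n : ℕ} (K C : Matrix (Fin n ⊕ Fin n) (Fin n ⊕ Fin n) ℝ) (t : ℝ) :
    Matrix (Fin n ⊕ Fin n) (Fin n ⊕ Fin n) ℝ :=
  Matrix.of fun i j => ∫ s in (0:ℝ)..t,
    (NormedSpace.exp (s • Kᵀ) * C * NormedSpace.exp (s • K)) i j

/-- The quantum Fourier transform of the Gaussian state with momentum mean `ℓ`, position
mean `m` and covariance matrix `S`:
`φ_{ℓ,m,S}(z) = exp (−i√2 (ℓᵀx − mᵀy) − (xᵀ, yᵀ) S (x; y))`, `x = Re z`, `y = Im z`. -/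
noncomputable def gaussPhi {n : ℕ} (ℓ m : Fin n → ℝ)
    (S : Matrix (Fin n ⊕ Fin n) (Fin n ⊕ Fin n) ℝ) (z : Fin n → ℂ) : ℂ :=
  Complex.exp (-Complex.I * (Real.sqrt 2 : ℝ)
      * (((∑ i, ℓ i * (z i).re) - ∑ i, m i * (z i).im : ℝ) : ℂ)
    - ((Rv z ⬝ᵥ (S *ᵥ Rv z) : ℝ) : ℂ))

/-!
In the real coordinates `v = Rz`, `φ_{ℓ,m,S}` is the Gaussian `v ↦ exp (−i√2 aᵀv − vᵀSv)` with
`a = (ℓ; −m)`. Precomposing such a Gaussian with a linear map `E` replaces `(a, S)` by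
`(Eᵀa, EᵀSE)`, and multiplying it by `exp (−½ vᵀBv)` replaces `S` by `S + ½B`; with
`E = e^{tK}` and `(e^{tK})ᵀ = e^{tKᵀ}` this is the identity.
-/

noncomputable def gaussChar {ι : Type*} [Fintype ι] (a : ι → ℝ) (S : Matrix ι ι ℝ) (v : ι → ℝ) :
    ℂ :=
  Complex.exp (-Complex.I * (Real.sqrt 2 : ℝ) * ((a ⬝ᵥ v : ℝ) : ℂ) - ((v ⬝ᵥ (S *ᵥ v) : ℝ) : ℂ))

lemma Rv_Rinv {n : ℕ} (w : Fin n ⊕ Fin n → ℝ) : Rv (Rinv w) = w := by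
  funext i
  cases i <;> simp [Rv, Rinv]

lemma gaussPhi_eq_gaussChar {n : ℕ} (ℓ m : Fin n → ℝ)
    (S : Matrix (Fin n ⊕ Fin n) (Fin n ⊕ Fin n) ℝ) (z : Fin n → ℂ) :
    gaussPhi ℓ m S z = gaussChar (Sum.elim ℓ fun i => -m i) S (Rv z) := by
  have hlin : (∑ i, ℓ i * (z i).re) - ∑ i, m i * (z i).im
      = (Sum.elim ℓ fun i => -m i) ⬝ᵥ Rv z := by
    simp [dotProduct, Fintype.sum_sum_type, Rv, sub_eq_add_neg]
  rw [gaussPhi, gaussChar, hlin]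

lemma gaussChar_mulVec {ι : Type*} [Fintype ι] (a : ι → ℝ) (S E : Matrix ι ι ℝ) (v : ι → ℝ) :
    gaussChar a S (E *ᵥ v) = gaussChar (Eᵀ *ᵥ a) (Eᵀ * S * E) v := by
  have hlin : a ⬝ᵥ (E *ᵥ v) = (Eᵀ *ᵥ a) ⬝ᵥ v := by
    rw [dotProduct_mulVec, mulVec_transpose]
  have hquad : (E *ᵥ v) ⬝ᵥ (S *ᵥ (E *ᵥ v)) = v ⬝ᵥ ((Eᵀ * S * E) *ᵥ v) := by
    rw [← mulVec_mulVec, ← mulVec_mulVec, dotProduct_mulVec v Eᵀ, vecMul_transpose]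
  rw [gaussChar, gaussChar, hlin, hquad]

lemma gaussChar_mul_exp {ι : Type*} [Fintype ι] (a : ι → ℝ) (S B : Matrix ι ι ℝ) (c : ℝ)
    (v : ι → ℝ) :
    gaussChar a S v * Complex.exp (-(c : ℂ) * ((v ⬝ᵥ (B *ᵥ v) : ℝ) : ℂ))
      = gaussChar a (S + c • B) v := by
  rw [gaussChar, gaussChar, ← Complex.exp_add, add_mulVec, dotProduct_add, smul_mulVec,
    dotProduct_smul, smul_eq_mul]
  push_cast
  ring_nf

theorem gaussian_state_evolution_general {n : ℕ} (ℓ m : Fin n → ℝ)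
    (S K C : Matrix (Fin n ⊕ Fin n) (Fin n ⊕ Fin n) ℝ)
    (t : ℝ) (z : Fin n → ℂ) :
    gaussPhi ℓ m S (Rinv (NormedSpace.exp (t • K) *ᵥ Rv z))
        * Complex.exp (-(1 / 2 : ℂ) * ((Rv z ⬝ᵥ (Bmat K C t *ᵥ Rv z) : ℝ) : ℂ))
      = gaussPhi
          (fun i => (NormedSpace.exp (t • Kᵀ) *ᵥ Sum.elim ℓ fun i => -m i) (Sum.inl i))
          (fun i => -((NormedSpace.exp (t • Kᵀ) *ᵥ Sum.elim ℓ fun i => -m i) (Sum.inr i)))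
          (NormedSpace.exp (t • Kᵀ) * S * NormedSpace.exp (t • K)
            + (1 / 2 : ℝ) • Bmat K C t)
          z := by
  have hexpT : NormedSpace.exp (t • Kᵀ) = (NormedSpace.exp (t • K))ᵀ := by
    rw [← transpose_smul, exp_transpose]
  have hhalf : (1 / 2 : ℂ) = ((1 / 2 : ℝ) : ℂ) := by push_cast; rfl
  rw [gaussPhi_eq_gaussChar, gaussPhi_eq_gaussChar, Rv_Rinv, gaussChar_mulVec, hhalf,
    gaussChar_mul_exp, hexpT]
  congr 1
  funext i
  cases i <;> simp

/-- The predual of the quasifree semigroup determined by `(K, C)` maps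
Gaussian states to Gaussian states: with `(ℓ_t; −m_t) = e^{tKᵀ}(ℓ; −m)` and
`S_t = e^{tKᵀ} S e^{tK} + ½ ∫_0^t e^{sKᵀ} C e^{sK} ds`, one has
`φ_{ℓ,m,S}(R⁻¹ e^{tK} R z) · exp (−½ (Rz)ᵀ B_t (Rz)) = φ_{ℓ_t,m_t,S_t}(z)`. -/
theorem gaussian_state_evolution {n : ℕ} (ℓ m : Fin n → ℝ)
    (S K C : Matrix (Fin n ⊕ Fin n) (Fin n ⊕ Fin n) ℝ)
    (hS : S.IsSymm) (hC : C.IsSymm) (t : ℝ) (ht : 0 ≤ t) (z : Fin n → ℂ) :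
    gaussPhi ℓ m S (Rinv (NormedSpace.exp (t • K) *ᵥ Rv z))
        * Complex.exp (-(1 / 2 : ℂ) * ((Rv z ⬝ᵥ (Bmat K C t *ᵥ Rv z) : ℝ) : ℂ))
      = gaussPhi
          (fun i => (NormedSpace.exp (t • Kᵀ) *ᵥ Sum.elim ℓ fun i => -m i) (Sum.inl i))
          (fun i => -((NormedSpace.exp (t • Kᵀ) *ᵥ Sum.elim ℓ fun i => -m i) (Sum.inr i)))
          (NormedSpace.exp (t • Kᵀ) * S * NormedSpace.exp (t • K)
            + (1 / 2 : ℝ) • Bmat K C t)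
          z :=
  gaussian_state_evolution_general ℓ m S K C t z
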